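/- arXiv:2111.12149 — 3 statements merged into one kernel-verified Lean document; each statement's English description precedes it below -/
import Mathlib

section
/- Fix an iterate (α^t, β^t, γ^t) and step sizes s_β > 0, s_{γ(k)} > 0 (k = 1,…,K), s_α > 0. Define: ν = β^t − s_β ∇_β L(α^t, β^t, γ^t); β^{t+1} ∈ ℝ^{p×C} with rows β^{t+1}_{j,:} = max(1 − s_β λ/‖ν_{j,:}‖₂, 0) · ν_{j,:} (and β^{t+1}_{j,:} = 0 when ν_{j,:} = 0); γ^{t+1}_{(k)} = (1 + s_{γ(k)} ρ)^{-1} (γ^t_{(k)} − s_{γ(k)} ∇_{γ_{(k)}} L(α^t, β^{t+1}, γ^t)) for each k; and α^{t+1} = α^t − s_α ∇_α L(α^t, β^{t+1}, γ^{t+1}). Assume the step sizes are small enough that the quadratic majorization of L holds in each block, i.e.: (i) L(α^t, β, γ^t) ≤ L(α^t, β^t, γ^t) + ⟨∇_β L(α^t, β^t, γ^t), β − β^t⟩ + (1/(2 s_β))‖β − β^t‖_F² for all β ∈ ℝ^{p×C}; (ii) for each k, the dataset-k portion of L, as a function of γ_{(k)} with (α^t, β^{t+1}) and the other γ blocks fixed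 at γ^t, is majorized at γ^t_{(k)} by its first-order expansion plus (1/(2 s_{γ(k)}))‖γ_{(k)} − γ^t_{(k)}‖_F²; and (iii) L(α, β^{t+1}, γ^{t+1}) ≤ L(α^t, β^{t+1}, γ^{t+1}) + ⟨∇_α L(α^t, β^{t+1}, γ^{t+1}), α − α^t⟩ + (1/(2 s_α))‖α − α^t‖₂² for all α ∈ ℝ^C. Then F_{λ,ρ}(α^{t+1}, β^{t+1}, γ^{t+1}) ≤ F_{λ,ρ}(α^t, β^t, γ^t). -/
open scoped BigOperators

/-- Linear predictor `η_{(k)i,l} = α_l + x_{(k)i}ᵀ β_l + z_{(k)i}ᵀ γ_{(k)l}`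
for a single observation with predictors `x`, batch covariates `z`. -/
noncomputable def eta {C : Type} [Fintype C] {p r : ℕ}
    (x : Fin p → ℝ) (z : Fin r → ℝ)
    (α : C → ℝ) (β : Fin p → C → ℝ) (γ : Fin r → C → ℝ) (l : C) : ℝ :=
  α l + ∑ j, x j * β j l + ∑ q, z q * γ q l

/-- Negative log-likelihood of one binned multinomial observation with bin `S`,
as a function of the linear predictor `η ∈ ℝ^C`. -/
noncomputable def obsNLL {C : Type} [Fintype C] (S : Finset C) (η : C → ℝ) : ℝ :=
  - Real.log ((∑ l ∈ S, Real.exp (η l)) / ∑ v, Real.exp (η v))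

/-- Scaled negative log-likelihood
`L(α,β,γ) = -(1/N) Σ_k Σ_i log( Σ_{l∈S_{(k)i}} exp(η_{(k)i,l}) / Σ_{v∈C} exp(η_{(k)i,v}) )`. -/
noncomputable def negLogLik {C : Type} [Fintype C] {K p r : ℕ} (n : Fin K → ℕ)
    (x : (k : Fin K) → Fin (n k) → Fin p → ℝ)
    (z : (k : Fin K) → Fin (n k) → Fin r → ℝ)
    (S : (k : Fin K) → Fin (n k) → Finset C)
    (α : C → ℝ) (β : Fin p → C → ℝ) (γ : Fin K → Fin r → C → ℝ) : ℝ :=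
  ((∑ k, n k : ℕ) : ℝ)⁻¹ * ∑ k, ∑ i, obsNLL (S k i) (eta (x k i) (z k i) α β (γ k))

/-- Penalized objective
`F_{λ,ρ}(α,β,γ) = L(α,β,γ) + λ Σ_j ‖β_{j,:}‖₂ + (ρ/2) Σ_k ‖γ_{(k)}‖_F²`. -/
noncomputable def penObj {C : Type} [Fintype C] {K p r : ℕ} (n : Fin K → ℕ)
    (x : (k : Fin K) → Fin (n k) → Fin p → ℝ)
    (z : (k : Fin K) → Fin (n k) → Fin r → ℝ)
    (S : (k : Fin K) → Fin (n k) → Finset C)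
    (lam ρ : ℝ)
    (α : C → ℝ) (β : Fin p → C → ℝ) (γ : Fin K → Fin r → C → ℝ) : ℝ :=
  negLogLik n x z S α β γ + lam * ∑ j, Real.sqrt (∑ l, (β j l) ^ 2)
    + (ρ / 2) * ∑ k, ∑ q, ∑ l, (γ k q l) ^ 2

/-!
Each block update is a proximal step on the quadratic majorizer of `L` in that block: group
soft-thresholding is the prox of `t ‖·‖`, the γ-update the prox of the ridge penalty, and the
α-update a plain gradient step. At the new point the majorizer plus penalty is no larger than at the
old point, where the majorizer equals `L`. Chaining the β-, γ- and α-blocks gives the descent.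
-/

open Finset

section ProxSteps

lemma ridgeProx_surrogate_le {s ρ a D g : ℝ} (hs : 0 < s) (hρ : 0 ≤ ρ)
    (hg : g = (1 + s * ρ)⁻¹ * (a - s * D)) :
    D * (g - a) + 1 / (2 * s) * (g - a) ^ 2 + ρ / 2 * g ^ 2 ≤ ρ / 2 * a ^ 2 := by
  have hD : D = (a - (1 + s * ρ) * g) / s := by
    rw [hg]; field_simp; ring
  have hgap : D * (g - a) + 1 / (2 * s) * (g - a) ^ 2 + ρ / 2 * g ^ 2 - ρ / 2 * a ^ 2
      = -((1 + s * ρ) * (g - a) ^ 2 / (2 * s)) := by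
    rw [hD]; field_simp; ring
  have : 0 ≤ (1 + s * ρ) * (g - a) ^ 2 / (2 * s) := by positivity
  linarith

lemma softThreshold_le {t V A : ℝ} (ht : 0 ≤ t) (hV : 0 ≤ V) (hA : 0 ≤ A) :
    1 / 2 * ((1 - max (1 - t / V) 0) * V) ^ 2 + t * (max (1 - t / V) 0 * V)
      ≤ 1 / 2 * (A - V) ^ 2 + t * A := by
  rw [sub_mul, one_mul]
  rcases le_or_gt V t with hVt | htV
  · have hzero : max (1 - t / V) 0 * V = 0 := by
      rcases hV.eq_or_lt with rfl | hVpos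
      · rw [mul_zero]
      · rw [max_eq_right (by rw [sub_nonpos, one_le_div hVpos]; exact hVt), zero_mul]
    rw [hzero]
    nlinarith [mul_nonneg hA (sub_nonneg.2 hVt)]
  · have hVpos : 0 < V := ht.trans_lt htV
    have hshrink : max (1 - t / V) 0 * V = V - t := by
      rw [max_eq_left (by rw [sub_nonneg, div_le_one hVpos]; exact htV.le)]
      field_simp
    rw [hshrink]
    nlinarith [sq_nonneg (A - V + t)]

variable {E : Type*} [SeminormedAddCommGroup E] [NormedSpace ℝ E]

/-- At `v = 0` the junk value `t / 0 = 0` is harmless: the result is `0` either way. -/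
noncomputable def groupSoftThreshold (t : ℝ) (v : E) : E :=
  max (1 - t / ‖v‖) 0 • v

lemma groupSoftThreshold_prox_le {t : ℝ} (ht : 0 ≤ t) (ν a : E) :
    1 / 2 * ‖groupSoftThreshold t ν - ν‖ ^ 2 + t * ‖groupSoftThreshold t ν‖
      ≤ 1 / 2 * ‖a - ν‖ ^ 2 + t * ‖a‖ := by
  set c := max (1 - t / ‖ν‖) 0 with hc
  have hc0 : 0 ≤ c := le_max_right _ _
  have hc1 : c ≤ 1 := max_le (by linarith [div_nonneg ht (norm_nonneg ν)]) zero_le_one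
  have hsub : ‖groupSoftThreshold t ν - ν‖ = (1 - c) * ‖ν‖ := by
    rw [groupSoftThreshold, ← hc, norm_sub_rev, ← norm_smul_of_nonneg (sub_nonneg.2 hc1), sub_smul,
      one_smul]
  have hnorm : ‖groupSoftThreshold t ν‖ = c * ‖ν‖ := by
    rw [groupSoftThreshold, ← hc, norm_smul, Real.norm_of_nonneg hc0]
  have hdist : (‖a‖ - ‖ν‖) ^ 2 ≤ ‖a - ν‖ ^ 2 := by
    rw [← sq_abs]
    exact pow_le_pow_left₀ (abs_nonneg _) (abs_norm_sub_norm_le a ν) 2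
  rw [hsub, hnorm]
  linarith [softThreshold_le ht (norm_nonneg ν) (norm_nonneg a)]

end ProxSteps

section BlockDescent

variable {ι κ : Type*} [Fintype ι] [Fintype κ]

lemma norm_toLp_euclidean (v : κ → ℝ) :
    ‖(WithLp.toLp 2 v : EuclideanSpace ℝ κ)‖ = √(∑ l, v l ^ 2) := by
  simp only [EuclideanSpace.norm_eq, Real.norm_eq_abs, sq_abs]

lemma sum_sub_sq_eq_norm_sq (u v : κ → ℝ) :
    ∑ l, (u l - v l) ^ 2 = ‖(WithLp.toLp 2 u - WithLp.toLp 2 v : EuclideanSpace ℝ κ)‖ ^ 2 := by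
  rw [← WithLp.toLp_sub, norm_toLp_euclidean, Real.sq_sqrt (by positivity)]
  rfl

lemma groupLasso_surrogate_le {s lam : ℝ} (hs : 0 < s) (hlam : 0 ≤ lam) {a D ν b : κ → ℝ}
    (hν : ∀ l, ν l = a l - s * D l) (hb : b = max (1 - s * lam / √(∑ l, ν l ^ 2)) 0 • ν) :
    ∑ l, D l * (b l - a l) + 1 / (2 * s) * ∑ l, (b l - a l) ^ 2 + lam * √(∑ l, b l ^ 2)
      ≤ lam * √(∑ l, a l ^ 2) := by
  have hsquare : ∑ l, D l * (b l - a l) + 1 / (2 * s) * ∑ l, (b l - a l) ^ 2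
      = (1 / 2 * ∑ l, (b l - ν l) ^ 2 - 1 / 2 * ∑ l, (a l - ν l) ^ 2) / s := by
    simp only [hν, mul_sum, sum_div, ← sum_add_distrib, ← sum_sub_distrib]
    refine sum_congr rfl fun l _ => ?_
    field_simp
    ring
  have hprox := groupSoftThreshold_prox_le (mul_nonneg hs.le hlam)
    (WithLp.toLp 2 ν : EuclideanSpace ℝ κ) (WithLp.toLp 2 a)
  have hthr : groupSoftThreshold (s * lam) (WithLp.toLp 2 ν : EuclideanSpace ℝ κ)
      = WithLp.toLp 2 b := by
    rw [groupSoftThreshold, norm_toLp_euclidean, hb, WithLp.toLp_smul]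
  rw [hthr, ← sum_sub_sq_eq_norm_sq, ← sum_sub_sq_eq_norm_sq, norm_toLp_euclidean,
    norm_toLp_euclidean] at hprox
  rw [hsquare, div_add' _ _ _ hs.ne', div_le_iff₀ hs]
  linarith

lemma groupLasso_descent (f : (ι → κ → ℝ) → ℝ) {s lam : ℝ} (hs : 0 < s) (hlam : 0 ≤ lam)
    {a D ν b : ι → κ → ℝ} (hν : ∀ j l, ν j l = a j l - s * D j l)
    (hb : ∀ j, b j = max (1 - s * lam / √(∑ l, ν j l ^ 2)) 0 • ν j)
    (hmaj : f b ≤ f a + ∑ j, ∑ l, D j l * (b j l - a j l)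
      + 1 / (2 * s) * ∑ j, ∑ l, (b j l - a j l) ^ 2) :
    f b + lam * ∑ j, √(∑ l, b j l ^ 2) ≤ f a + lam * ∑ j, √(∑ l, a j l ^ 2) := by
  have := sum_le_sum fun j (_ : j ∈ univ) => groupLasso_surrogate_le hs hlam (hν j) (hb j)
  simp only [mul_sum, sum_add_distrib] at this hmaj ⊢
  linarith

lemma ridgeProx_descent (f : (ι → κ → ℝ) → ℝ) {s ρ : ℝ} (hs : 0 < s) (hρ : 0 ≤ ρ)
    {a D g : ι → κ → ℝ} (hg : ∀ q l, g q l = (1 + s * ρ)⁻¹ * (a q l - s * D q l))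
    (hmaj : f g ≤ f a + ∑ q, ∑ l, D q l * (g q l - a q l)
      + 1 / (2 * s) * ∑ q, ∑ l, (g q l - a q l) ^ 2) :
    f g + ρ / 2 * ∑ q, ∑ l, g q l ^ 2 ≤ f a + ρ / 2 * ∑ q, ∑ l, a q l ^ 2 := by
  have := sum_le_sum fun q (_ : q ∈ univ) => sum_le_sum fun l (_ : l ∈ univ) =>
    ridgeProx_surrogate_le hs hρ (hg q l)
  simp only [mul_sum, sum_add_distrib] at this hmaj ⊢
  linarith

lemma gradStep_descent (f : (κ → ℝ) → ℝ) {s : ℝ} (hs : 0 < s) {a D g : κ → ℝ}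
    (hg : ∀ l, g l = a l - s * D l)
    (hmaj : f g ≤ f a + ∑ l, D l * (g l - a l) + 1 / (2 * s) * ∑ l, (g l - a l) ^ 2) :
    f g ≤ f a := by
  -- a gradient step is the ridge prox step with `ρ = 0`
  have := sum_le_sum fun l (_ : l ∈ univ) =>
    ridgeProx_surrogate_le (a := a l) (D := D l) hs le_rfl (by simpa using hg l)
  simp only [mul_sum, sum_add_distrib, zero_div, zero_mul, sum_const_zero, add_zero] at this hmaj
  linarith

end BlockDescent

section Likelihood

variable {C : Type} [Fintype C] {K p r : ℕ} (n : Fin K → ℕ)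
    (x : (k : Fin K) → Fin (n k) → Fin p → ℝ) (z : (k : Fin K) → Fin (n k) → Fin r → ℝ)
    (S : (k : Fin K) → Fin (n k) → Finset C)

noncomputable def datasetNegLogLik (α : C → ℝ) (β : Fin p → C → ℝ) (k : Fin K)
    (g : Fin r → C → ℝ) : ℝ :=
  ((∑ k', n k' : ℕ) : ℝ)⁻¹ * ∑ i, obsNLL (S k i) (eta (x k i) (z k i) α β g)

lemma negLogLik_eq_sum_datasetNegLogLik (α : C → ℝ) (β : Fin p → C → ℝ)
    (γ : Fin K → Fin r → C → ℝ) :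
    negLogLik n x z S α β γ = ∑ k, datasetNegLogLik n x z S α β k (γ k) := by
  rw [negLogLik, mul_sum]
  rfl

lemma negLogLik_update_eq (α : C → ℝ) (β : Fin p → C → ℝ) (γ : Fin K → Fin r → C → ℝ)
    (k : Fin K) (g : Fin r → C → ℝ) :
    negLogLik n x z S α β (Function.update γ k g) = datasetNegLogLik n x z S α β k g
      + ∑ k' ∈ univ.erase k, datasetNegLogLik n x z S α β k' (γ k') := by
  rw [negLogLik_eq_sum_datasetNegLogLik, ← add_sum_erase _ _ (mem_univ k), Function.update_self]
  congr 1
  exact sum_congr rfl fun k' hk' => by rw [Function.update_of_ne (ne_of_mem_erase hk')]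

lemma fderiv_negLogLik_update (α : C → ℝ) (β : Fin p → C → ℝ) (γ : Fin K → Fin r → C → ℝ)
    (k : Fin K) :
    fderiv ℝ (fun g => negLogLik n x z S α β (Function.update γ k g))
      = fderiv ℝ (datasetNegLogLik n x z S α β k) := by
  funext g
  simp only [negLogLik_update_eq]
  exact fderiv_add_const _

lemma negLogLik_add_ridge_le {α : C → ℝ} {β : Fin p → C → ℝ} {γ γ' : Fin K → Fin r → C → ℝ}
    {ρ : ℝ} (h : ∀ k, datasetNegLogLik n x z S α β k (γ' k) + ρ / 2 * ∑ q, ∑ l, γ' k q l ^ 2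
      ≤ datasetNegLogLik n x z S α β k (γ k) + ρ / 2 * ∑ q, ∑ l, γ k q l ^ 2) :
    negLogLik n x z S α β γ' + ρ / 2 * ∑ k, ∑ q, ∑ l, γ' k q l ^ 2
      ≤ negLogLik n x z S α β γ + ρ / 2 * ∑ k, ∑ q, ∑ l, γ k q l ^ 2 := by
  rw [negLogLik_eq_sum_datasetNegLogLik, negLogLik_eq_sum_datasetNegLogLik,
    mul_sum univ, mul_sum univ, ← sum_add_distrib, ← sum_add_distrib]
  exact sum_le_sum fun k _ => h k

end Likelihood

theorem blockwise_prox_grad_descent_property_general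
    {C : Type} [Fintype C] [DecidableEq C]
    {K p r : ℕ} (n : Fin K → ℕ)
    (x : (k : Fin K) → Fin (n k) → Fin p → ℝ)
    (z : (k : Fin K) → Fin (n k) → Fin r → ℝ)
    (S : (k : Fin K) → Fin (n k) → Finset C)
    (lam ρ : ℝ) (hlam : 0 < lam) (hρ : 0 < ρ)
    -- current iterate and step sizes
    (αt : C → ℝ) (βt : Fin p → C → ℝ) (γt : Fin K → Fin r → C → ℝ)
    (sβ : ℝ) (hsβ : 0 < sβ) (sγ : Fin K → ℝ) (hsγ : ∀ k, 0 < sγ k) (sα : ℝ) (hsα : 0 < sα)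
    -- ν = βᵗ - s_β ∇_β L(αᵗ, βᵗ, γᵗ)
    (ν : Fin p → C → ℝ)
    (hν : ∀ (j : Fin p) (l : C),
      ν j l = βt j l - sβ *
        fderiv ℝ (fun β => negLogLik n x z S αt β γt) βt (Pi.single j (Pi.single l 1)))
    -- β-update: rowwise group soft-thresholding of ν
    (βn : Fin p → C → ℝ)
    (hβn : ∀ j : Fin p,
      (ν j ≠ 0 → ∀ l : C,
        βn j l = max (1 - sβ * lam / Real.sqrt (∑ l', (ν j l') ^ 2)) 0 * ν j l) ∧
      (ν j = 0 → βn j = 0))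
    -- γ-update: ridge-prox step on each block, using ∇_{γ_{(k)}} L(αᵗ, βᵗ⁺¹, γᵗ)
    (γn : Fin K → Fin r → C → ℝ)
    (hγn : ∀ (k : Fin K) (q : Fin r) (l : C),
      γn k q l = (1 + sγ k * ρ)⁻¹ * (γt k q l - sγ k *
        fderiv ℝ (fun g => negLogLik n x z S αt βn (Function.update γt k g)) (γt k)
          (Pi.single q (Pi.single l 1))))
    -- α-update: gradient step using ∇_α L(αᵗ, βᵗ⁺¹, γᵗ⁺¹)
    (αn : C → ℝ)
    (hαn : ∀ l : C,
      αn l = αt l - sα *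
        fderiv ℝ (fun α => negLogLik n x z S α βn γn) αt (Pi.single l 1))
    -- (i) quadratic majorization of L in the β-block at βᵗ
    (hmajβ : ∀ β : Fin p → C → ℝ,
      negLogLik n x z S αt β γt ≤
        negLogLik n x z S αt βt γt
          + ∑ j, ∑ l,
              fderiv ℝ (fun β' => negLogLik n x z S αt β' γt) βt
                (Pi.single j (Pi.single l 1)) * (β j l - βt j l)
          + (1 / (2 * sβ)) * ∑ j, ∑ l, (β j l - βt j l) ^ 2)
    -- (ii) quadratic majorization of the dataset-k portion of L in γ_{(k)} at γᵗ_{(k)},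
    -- with (αᵗ, βᵗ⁺¹) and the other γ blocks fixed
    (hmajγ : ∀ (k : Fin K) (g : Fin r → C → ℝ),
      ((∑ k', n k' : ℕ) : ℝ)⁻¹ * ∑ i, obsNLL (S k i) (eta (x k i) (z k i) αt βn g) ≤
        ((∑ k', n k' : ℕ) : ℝ)⁻¹ * ∑ i, obsNLL (S k i) (eta (x k i) (z k i) αt βn (γt k))
          + ∑ q, ∑ l,
              fderiv ℝ
                (fun g' => ((∑ k', n k' : ℕ) : ℝ)⁻¹ *
                  ∑ i, obsNLL (S k i) (eta (x k i) (z k i) αt βn g')) (γt k)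
                (Pi.single q (Pi.single l 1)) * (g q l - γt k q l)
          + (1 / (2 * sγ k)) * ∑ q, ∑ l, (g q l - γt k q l) ^ 2)
    -- (iii) quadratic majorization of L in the α-block at αᵗ
    (hmajα : ∀ α : C → ℝ,
      negLogLik n x z S α βn γn ≤
        negLogLik n x z S αt βn γn
          + ∑ l,
              fderiv ℝ (fun α' => negLogLik n x z S α' βn γn) αt
                (Pi.single l 1) * (α l - αt l)
          + (1 / (2 * sα)) * ∑ l, (α l - αt l) ^ 2) :
    penObj n x z S lam ρ αn βn γn ≤ penObj n x z S lam ρ αt βt γt := by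
  have hβrow : ∀ j, βn j = max (1 - sβ * lam / √(∑ l, ν j l ^ 2)) 0 • ν j := fun j => by
    by_cases h : ν j = 0
    · rw [(hβn j).2 h, h, smul_zero]
    · exact funext ((hβn j).1 h)
  have hβ := groupLasso_descent (fun β => negLogLik n x z S αt β γt) hsβ hlam.le hν hβrow
    (hmajβ βn)
  simp only [fderiv_negLogLik_update] at hγn
  have hγ := negLogLik_add_ridge_le n x z S fun k =>
    ridgeProx_descent (datasetNegLogLik n x z S αt βn k) (hsγ k) hρ.le (hγn k) (hmajγ k (γn k))
  have hα := gradStep_descent (fun α => negLogLik n x z S α βn γn) hsα hαn (hmajα αn)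
  rw [penObj, penObj]
  linarith

/-- Lemma 1 (descent property): one full iteration of the blockwise proximal gradient
algorithm (β-prox step, γ-ridge-prox steps, α-gradient step), with step sizes small enough
that the blockwise quadratic majorizations of `L` hold, does not increase the penalized
objective `F_{λ,ρ}`. -/
theorem blockwise_prox_grad_descent_property
    {C : Type} [Fintype C] [DecidableEq C] [Nonempty C]
    {K p r : ℕ} (hK : 1 ≤ K) (n : Fin K → ℕ) (hn : ∀ k, 1 ≤ n k)
    (x : (k : Fin K) → Fin (n k) → Fin p → ℝ)
    (z : (k : Fin K) → Fin (n k) → Fin r → ℝ)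
    (S : (k : Fin K) → Fin (n k) → Finset C) (hS : ∀ k i, (S k i).Nonempty)
    (lam ρ : ℝ) (hlam : 0 < lam) (hρ : 0 < ρ)
    -- current iterate and step sizes
    (αt : C → ℝ) (βt : Fin p → C → ℝ) (γt : Fin K → Fin r → C → ℝ)
    (sβ : ℝ) (hsβ : 0 < sβ) (sγ : Fin K → ℝ) (hsγ : ∀ k, 0 < sγ k) (sα : ℝ) (hsα : 0 < sα)
    -- ν = βᵗ - s_β ∇_β L(αᵗ, βᵗ, γᵗ)
    (ν : Fin p → C → ℝ)
    (hν : ∀ (j : Fin p) (l : C),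
      ν j l = βt j l - sβ *
        fderiv ℝ (fun β => negLogLik n x z S αt β γt) βt (Pi.single j (Pi.single l 1)))
    -- β-update: rowwise group soft-thresholding of ν
    (βn : Fin p → C → ℝ)
    (hβn : ∀ j : Fin p,
      (ν j ≠ 0 → ∀ l : C,
        βn j l = max (1 - sβ * lam / Real.sqrt (∑ l', (ν j l') ^ 2)) 0 * ν j l) ∧
      (ν j = 0 → βn j = 0))
    -- γ-update: ridge-prox step on each block, using ∇_{γ_{(k)}} L(αᵗ, βᵗ⁺¹, γᵗ)
    (γn : Fin K → Fin r → C → ℝ)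
    (hγn : ∀ (k : Fin K) (q : Fin r) (l : C),
      γn k q l = (1 + sγ k * ρ)⁻¹ * (γt k q l - sγ k *
        fderiv ℝ (fun g => negLogLik n x z S αt βn (Function.update γt k g)) (γt k)
          (Pi.single q (Pi.single l 1))))
    -- α-update: gradient step using ∇_α L(αᵗ, βᵗ⁺¹, γᵗ⁺¹)
    (αn : C → ℝ)
    (hαn : ∀ l : C,
      αn l = αt l - sα *
        fderiv ℝ (fun α => negLogLik n x z S α βn γn) αt (Pi.single l 1))
    -- (i) quadratic majorization of L in the β-block at βᵗ
    (hmajβ : ∀ β : Fin p → C → ℝ,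
      negLogLik n x z S αt β γt ≤
        negLogLik n x z S αt βt γt
          + ∑ j, ∑ l,
              fderiv ℝ (fun β' => negLogLik n x z S αt β' γt) βt
                (Pi.single j (Pi.single l 1)) * (β j l - βt j l)
          + (1 / (2 * sβ)) * ∑ j, ∑ l, (β j l - βt j l) ^ 2)
    -- (ii) quadratic majorization of the dataset-k portion of L in γ_{(k)} at γᵗ_{(k)},
    -- with (αᵗ, βᵗ⁺¹) and the other γ blocks fixed
    (hmajγ : ∀ (k : Fin K) (g : Fin r → C → ℝ),
      ((∑ k', n k' : ℕ) : ℝ)⁻¹ * ∑ i, obsNLL (S k i) (eta (x k i) (z k i) αt βn g) ≤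
        ((∑ k', n k' : ℕ) : ℝ)⁻¹ * ∑ i, obsNLL (S k i) (eta (x k i) (z k i) αt βn (γt k))
          + ∑ q, ∑ l,
              fderiv ℝ
                (fun g' => ((∑ k', n k' : ℕ) : ℝ)⁻¹ *
                  ∑ i, obsNLL (S k i) (eta (x k i) (z k i) αt βn g')) (γt k)
                (Pi.single q (Pi.single l 1)) * (g q l - γt k q l)
          + (1 / (2 * sγ k)) * ∑ q, ∑ l, (g q l - γt k q l) ^ 2)
    -- (iii) quadratic majorization of L in the α-block at αᵗ
    (hmajα : ∀ α : C → ℝ,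
      negLogLik n x z S α βn γn ≤
        negLogLik n x z S αt βn γn
          + ∑ l,
              fderiv ℝ (fun α' => negLogLik n x z S α' βn γn) αt
                (Pi.single l 1) * (α l - αt l)
          + (1 / (2 * sα)) * ∑ l, (α l - αt l) ^ 2) :
    penObj n x z S lam ρ αn βn γn ≤ penObj n x z S lam ρ αt βt γt :=
  blockwise_prox_grad_descent_property_general n x z S lam ρ hlam hρ αt βt γt sβ hsβ sγ hsγ sα hsα ν
    hν βn hβn γn hγn αn hαn hmajβ hmajγ hmajα
end

section
/- Let X_{(k)} ∈ ℝ^{n_k×p} denote the matrix whose i-th row is x_{(k)i}. For every α ∈ ℝ^C, γ, every β^t, β ∈ ℝ^{p×C}, and every step size s_β with 0 < s_β < N / (√|C| · Σ_{k=1}^K ‖X_{(k)}‖_F²), the quadratic majorization L(α, β, γ) ≤ L(α, β^t, γ) + tr( ∇_β L(α, β^t, γ)ᵀ (β − β^t) ) + (1/(2 s_β)) ‖β − β^t‖_F² holds, where ∇_β L denotes the gradient of β ↦ L(α, β, γ). -/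
open scoped BigOperators

/-!
Along the segment `βᵗ + t (β - βᵗ)` every linear predictor moves on a line `η + t a` with
`a = (β - βᵗ)ᵀ x`. The loss of one observation is `log Σ_C e^η - log Σ_S e^η`, whose second
derivative along the line is the difference of the softmax variances of `a` over `C` and over `S`,
hence at most `Σ_l a_l²`, which Cauchy–Schwarz bounds by `‖x‖² ‖β - βᵗ‖_F²`. So `L` has curvature
at most `N⁻¹ Σ ‖x‖² ‖β - βᵗ‖_F²` along the segment, and the step-size condition (with `√|C| ≥ 1`)
makes this at most `‖β - βᵗ‖_F² / s_β`; a second-order Taylor bound concludes.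
-/

open Finset Real

theorem le_add_deriv_mul_add_of_deriv2_le {g g' g'' : ℝ → ℝ} {M x y : ℝ} (hxy : x < y)
    (hg : ∀ t, HasDerivAt g (g' t) t) (hg' : ∀ t, HasDerivAt g' (g'' t) t)
    (hM : ∀ t, g'' t ≤ M) :
    g y ≤ g x + g' x * (y - x) + M / 2 * (y - x) ^ 2 := by
  have hh (t : ℝ) : HasDerivAt (fun t => M / 2 * t ^ 2 - g t) (M * t - g' t) t :=
    (((hasDerivAt_pow 2 t).const_mul (M / 2)).sub (hg t)).congr_deriv
      (by simp only [Nat.cast_ofNat, Nat.add_one_sub_one, pow_one]; ring)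
  have hh' (t : ℝ) : HasDerivAt (fun t => M * t - g' t) (M - g'' t) t := by
    simpa using ((hasDerivAt_id t).const_mul M).fun_sub (hg' t)
  have hconv : ConvexOn ℝ Set.univ (fun t => M / 2 * t ^ 2 - g t) :=
    convexOn_of_hasDerivWithinAt2_nonneg convex_univ
      (continuous_iff_continuousAt.2 fun t => (hh t).continuousAt).continuousOn
      (fun t _ => (hh t).hasDerivWithinAt) (fun t _ => (hh' t).hasDerivWithinAt)
      (fun t _ => sub_nonneg.2 (hM t))
  have hslope := hconv.le_slope_of_hasDerivAt (Set.mem_univ x) (Set.mem_univ y) hxy (hh x)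
  rw [slope_def_field, le_div_iff₀ (sub_pos.2 hxy)] at hslope
  nlinarith

section SoftmaxMoments

variable {ι : Type*} (T : Finset ι)

noncomputable def expMoment (η a : ι → ℝ) (m : ℕ) : ℝ := ∑ l ∈ T, a l ^ m * exp (η l)

noncomputable def softmaxMean (η a : ι → ℝ) : ℝ := expMoment T η a 1 / expMoment T η a 0

noncomputable def softmaxVar (η a : ι → ℝ) : ℝ :=
  expMoment T η a 2 / expMoment T η a 0 - softmaxMean T η a ^ 2

@[simp] theorem expMoment_zero (η a : ι → ℝ) : expMoment T η a 0 = ∑ l ∈ T, exp (η l) := by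
  simp [expMoment]

variable {T}

theorem expMoment_zero_pos (hT : T.Nonempty) (η a : ι → ℝ) : 0 < expMoment T η a 0 := by
  rw [expMoment_zero]
  exact sum_pos (fun l _ => exp_pos _) hT

theorem hasDerivAt_expMoment_line (c a : ι → ℝ) (m : ℕ) (t : ℝ) :
    HasDerivAt (fun t => expMoment T (c + t • a) a m) (expMoment T (c + t • a) a (m + 1)) t := by
  refine HasDerivAt.fun_sum fun l _ => ?_
  have hexp := (((hasDerivAt_id t).mul_const (a l)).const_add (c l)).exp.const_mul (a l ^ m)
  simpa [pow_succ, mul_comm, mul_left_comm, mul_assoc] using hexp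

theorem hasDerivAt_log_sum_exp_line (hT : T.Nonempty) (c a : ι → ℝ) (t : ℝ) :
    HasDerivAt (fun t => log (∑ l ∈ T, exp ((c + t • a) l))) (softmaxMean T (c + t • a) a) t := by
  simpa [softmaxMean] using (hasDerivAt_expMoment_line c a 0 t).log (expMoment_zero_pos hT _ a).ne'

theorem hasDerivAt_softmaxMean_line (hT : T.Nonempty) (c a : ι → ℝ) (t : ℝ) :
    HasDerivAt (fun t => softmaxMean T (c + t • a) a) (softmaxVar T (c + t • a) a) t := by
  have hZ := (expMoment_zero_pos hT (c + t • a) a).ne'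
  refine ((hasDerivAt_expMoment_line c a 1 t).div
    (hasDerivAt_expMoment_line c a 0 t) hZ).congr_deriv ?_
  simp only [softmaxVar, softmaxMean]
  field_simp

theorem softmaxVar_nonneg (η a : ι → ℝ) : 0 ≤ softmaxVar T η a := by
  have hCS : expMoment T η a 1 ^ 2 ≤ expMoment T η a 2 * expMoment T η a 0 :=
    sum_sq_le_sum_mul_sum_of_sq_le_mul T (fun l _ => by positivity) (fun l _ => by positivity)
      (fun l _ => le_of_eq (by ring))
  have hZ : 0 ≤ expMoment T η a 0 := by rw [expMoment_zero]; positivity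
  rcases hZ.eq_or_lt with hZ | hZ
  · simp [softmaxVar, softmaxMean, ← hZ]
  · rw [softmaxVar, softmaxMean, sub_nonneg, div_pow, div_le_div_iff₀ (by positivity) hZ]
    nlinarith

theorem softmaxVar_le_sum_sq (η a : ι → ℝ) : softmaxVar T η a ≤ ∑ l ∈ T, a l ^ 2 := by
  have h2 : expMoment T η a 2 ≤ (∑ l ∈ T, a l ^ 2) * expMoment T η a 0 := by
    rw [expMoment_zero, sum_mul]
    refine sum_le_sum fun l hl => mul_le_mul_of_nonneg_left ?_ (sq_nonneg _)
    exact single_le_sum (fun v _ => (exp_pos (η v)).le) hl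
  calc softmaxVar T η a ≤ expMoment T η a 2 / expMoment T η a 0 :=
        sub_le_self _ (sq_nonneg _)
    _ ≤ ∑ l ∈ T, a l ^ 2 :=
        div_le_of_le_mul₀ (by rw [expMoment_zero]; positivity) (by positivity) h2

end SoftmaxMoments

section ObservationLoss

variable {C : Type} [Fintype C] {S : Finset C}

theorem obsNLL_eq_log_sub_log (hS : S.Nonempty) (η : C → ℝ) :
    obsNLL S η = log (∑ v, exp (η v)) - log (∑ l ∈ S, exp (η l)) := by
  have hpos : ∀ T : Finset C, T.Nonempty → 0 < ∑ l ∈ T, exp (η l) :=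
    fun T hT => sum_pos (fun l _ => exp_pos _) hT
  rw [obsNLL, log_div (hpos S hS).ne' (hpos univ (hS.mono (subset_univ S))).ne']
  ring

theorem differentiable_obsNLL (hS : S.Nonempty) : Differentiable ℝ (obsNLL S) := by
  intro η
  have hpos : ∀ T : Finset C, T.Nonempty → ∀ η : C → ℝ, ∑ l ∈ T, exp (η l) ≠ 0 :=
    fun T hT η => (sum_pos (fun l _ => exp_pos _) hT).ne'
  have hC : (univ : Finset C).Nonempty := hS.mono (subset_univ S)
  rw [show obsNLL S = fun η => log (∑ v, exp (η v)) - log (∑ l ∈ S, exp (η l)) from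
    funext (obsNLL_eq_log_sub_log hS)]
  fun_prop (disch := apply hpos; assumption)

theorem hasDerivAt_obsNLL_line (hS : S.Nonempty) (c a : C → ℝ) (t : ℝ) :
    HasDerivAt (fun t => obsNLL S (c + t • a))
      (softmaxMean univ (c + t • a) a - softmaxMean S (c + t • a) a) t := by
  simp_rw [obsNLL_eq_log_sub_log hS]
  exact (hasDerivAt_log_sum_exp_line (hS.mono (subset_univ S)) c a t).sub
    (hasDerivAt_log_sum_exp_line hS c a t)

theorem obsNLL_add_le (hS : S.Nonempty) (η a : C → ℝ) :
    obsNLL S (η + a) ≤ obsNLL S η + fderiv ℝ (obsNLL S) η a + (∑ l, a l ^ 2) / 2 := by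
  have hmean (t : ℝ) : HasDerivAt
      (fun t => softmaxMean univ (η + t • a) a - softmaxMean S (η + t • a) a)
      (softmaxVar univ (η + t • a) a - softmaxVar S (η + t • a) a) t :=
    (hasDerivAt_softmaxMean_line (hS.mono (subset_univ S)) η a t).sub
      (hasDerivAt_softmaxMean_line hS η a t)
  have hvar (t : ℝ) :
      softmaxVar univ (η + t • a) a - softmaxVar S (η + t • a) a ≤ ∑ l, a l ^ 2 := by
    linarith [softmaxVar_le_sum_sq (T := univ) (η + t • a) a,
      softmaxVar_nonneg (T := S) (η + t • a) a]
  have hline : HasDerivAt (fun t : ℝ => η + t • a) a 0 := by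
    simpa using ((hasDerivAt_id (0 : ℝ)).smul_const a).const_add η
  have hfderiv : HasDerivAt (fun t : ℝ => obsNLL S (η + t • a)) (fderiv ℝ (obsNLL S) η a) 0 :=
    (differentiable_obsNLL hS η).hasFDerivAt.comp_hasDerivAt_of_eq (0 : ℝ) hline (by simp)
  have hquad := le_add_deriv_mul_add_of_deriv2_le zero_lt_one (hasDerivAt_obsNLL_line hS η a)
    hmean hvar
  rw [(hasDerivAt_obsNLL_line hS η a 0).unique hfderiv] at hquad
  simpa using hquad

end ObservationLoss

section Predictor

variable {ι κ : Type*} [Fintype ι]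

noncomputable def predictorMap (x : ι → ℝ) : (ι → κ → ℝ) →L[ℝ] (κ → ℝ) :=
  ∑ j, x j • ContinuousLinearMap.proj j

theorem predictorMap_apply (x : ι → ℝ) (β : ι → κ → ℝ) (l : κ) :
    predictorMap x β l = ∑ j, x j * β j l := by
  simp [predictorMap]

theorem sum_sq_predictorMap_le [Fintype κ] (x : ι → ℝ) (d : ι → κ → ℝ) :
    ∑ l, predictorMap x d l ^ 2 ≤ (∑ j, x j ^ 2) * ∑ j, ∑ l, d j l ^ 2 :=
  calc ∑ l, predictorMap x d l ^ 2 ≤ ∑ l, (∑ j, x j ^ 2) * ∑ j, d j l ^ 2 :=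
        sum_le_sum fun l _ => by
          rw [predictorMap_apply]; exact sum_mul_sq_le_sq_mul_sq _ _ _
    _ = (∑ j, x j ^ 2) * ∑ j, ∑ l, d j l ^ 2 := by rw [← mul_sum, sum_comm]

theorem sum_sum_apply_single_mul {R : Type*} [CommSemiring R] [Fintype κ] [DecidableEq ι]
    [DecidableEq κ] (f : (ι → κ → R) →ₗ[R] R) (d : ι → κ → R) :
    ∑ j, ∑ l, f (Pi.single j (Pi.single l 1)) * d j l = f d := by
  have hd : d = ∑ j, ∑ l, d j l • Pi.single j (Pi.single l 1) := by
    funext j' l'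
    simp [Finset.sum_apply, Pi.single_apply, apply_ite (fun w : κ → R => w l')]
  conv_rhs => rw [hd]
  simp [map_sum, mul_comm]

end Predictor

theorem eta_eq_add_predictorMap {C : Type} [Fintype C] {p r : ℕ} (x : Fin p → ℝ) (z : Fin r → ℝ)
    (α : C → ℝ) (β β' : Fin p → C → ℝ) (γ : Fin r → C → ℝ) :
    eta x z α β γ = eta x z α β' γ + predictorMap x (β - β') := by
  funext l
  simp only [eta, Pi.add_apply, predictorMap_apply, Pi.sub_apply, mul_sub, sum_sub_distrib]
  ring

theorem hasFDerivAt_eta {C : Type} [Fintype C] {p r : ℕ} (x : Fin p → ℝ) (z : Fin r → ℝ)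
    (α : C → ℝ) (β : Fin p → C → ℝ) (γ : Fin r → C → ℝ) :
    HasFDerivAt (fun β => eta x z α β γ) (predictorMap x) β := by
  have h : (fun β => eta x z α β γ) = fun β => eta x z α 0 γ + predictorMap x β :=
    funext fun β => by simpa using eta_eq_add_predictorMap x z α β 0 γ
  rw [h]
  exact (predictorMap x).hasFDerivAt.const_add _

theorem hasFDerivAt_negLogLik {C : Type} [Fintype C] {K p r : ℕ} (n : Fin K → ℕ)
    (x : (k : Fin K) → Fin (n k) → Fin p → ℝ)
    (z : (k : Fin K) → Fin (n k) → Fin r → ℝ)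
    (S : (k : Fin K) → Fin (n k) → Finset C) (hS : ∀ k i, (S k i).Nonempty)
    (α : C → ℝ) (β : Fin p → C → ℝ) (γ : Fin K → Fin r → C → ℝ) :
    HasFDerivAt (fun β => negLogLik n x z S α β γ)
      (((∑ k, n k : ℕ) : ℝ)⁻¹ • ∑ k, ∑ i,
        (fderiv ℝ (obsNLL (S k i)) (eta (x k i) (z k i) α β (γ k))).comp
          (predictorMap (x k i))) β := by
  refine HasFDerivAt.const_mul
    (HasFDerivAt.fun_sum fun k _ => HasFDerivAt.fun_sum fun i _ => ?_) _
  exact (differentiable_obsNLL (hS k i) _).hasFDerivAt.comp β (hasFDerivAt_eta _ _ _ _ _)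

theorem inv_mul_le_inv_of_lt_div_sqrt_mul {s N Q : ℝ} {m : ℕ} (hs : 0 < s) (hN : 0 ≤ N)
    (h : s < N / (√m * Q)) : N⁻¹ * Q ≤ s⁻¹ := by
  have hD : 0 < √m * Q := by
    rcases div_pos_iff.1 (hs.trans h) with h' | h'
    · exact h'.2
    · linarith [h'.1]
  have hNpos : 0 < N := (div_pos_iff_of_pos_right hD).1 (hs.trans h)
  have hm : 1 ≤ √m := by
    refine Real.one_le_sqrt.2 (Nat.one_le_cast.2 (Nat.pos_of_ne_zero fun hm0 => ?_))
    simp [hm0] at hD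
  rw [lt_div_iff₀ hD] at h
  rw [inv_mul_le_iff₀ hNpos, le_mul_inv_iff₀ hs]
  nlinarith

theorem negLogLik_le_add_fderiv_add {C : Type} [Fintype C] {K p r : ℕ} (n : Fin K → ℕ)
    (x : (k : Fin K) → Fin (n k) → Fin p → ℝ)
    (z : (k : Fin K) → Fin (n k) → Fin r → ℝ)
    (S : (k : Fin K) → Fin (n k) → Finset C) (hS : ∀ k i, (S k i).Nonempty)
    (α : C → ℝ) (γ : Fin K → Fin r → C → ℝ) (βt β : Fin p → C → ℝ) :
    negLogLik n x z S α β γ ≤ negLogLik n x z S α βt γ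
      + fderiv ℝ (fun β' => negLogLik n x z S α β' γ) βt (β - βt)
      + ((∑ k, n k : ℕ) : ℝ)⁻¹ * (∑ k, ∑ i, ∑ j, x k i j ^ 2)
          * (∑ j, ∑ l, (β j l - βt j l) ^ 2) / 2 := by
  set N : ℝ := ((∑ k, n k : ℕ) : ℝ) with hN
  have hcurv : ∑ k, ∑ i, ∑ l, predictorMap (x k i) (β - βt) l ^ 2
      ≤ (∑ k, ∑ i, ∑ j, x k i j ^ 2) * ∑ j, ∑ l, (β j l - βt j l) ^ 2 := by
    refine (sum_le_sum fun k _ => sum_le_sum fun i _ => sum_sq_predictorMap_le _ _).trans_eq ?_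
    simp only [sum_mul, Pi.sub_apply]
  rw [(hasFDerivAt_negLogLik n x z S hS α βt γ).fderiv]
  calc negLogLik n x z S α β γ
      = N⁻¹ * ∑ k, ∑ i, obsNLL (S k i)
          (eta (x k i) (z k i) α βt (γ k) + predictorMap (x k i) (β - βt)) := by
        simp only [negLogLik, ← hN, eta_eq_add_predictorMap _ _ _ β βt]
    _ ≤ N⁻¹ * ∑ k, ∑ i, (obsNLL (S k i) (eta (x k i) (z k i) α βt (γ k))
          + fderiv ℝ (obsNLL (S k i)) (eta (x k i) (z k i) α βt (γ k))
              (predictorMap (x k i) (β - βt))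
          + (∑ l, predictorMap (x k i) (β - βt) l ^ 2) / 2) := by
        gcongr with k _ i _
        exact obsNLL_add_le (hS k i) _ _
    _ = negLogLik n x z S α βt γ
          + (N⁻¹ • ∑ k, ∑ i, (fderiv ℝ (obsNLL (S k i)) (eta (x k i) (z k i) α βt (γ k))).comp
              (predictorMap (x k i))) (β - βt)
          + N⁻¹ * (∑ k, ∑ i, ∑ l, predictorMap (x k i) (β - βt) l ^ 2) / 2 := by
        simp only [negLogLik, ← hN, sum_add_distrib, ← sum_div, smul_apply, FunLike.coe_sum,
          Finset.sum_apply, ContinuousLinearMap.comp_apply, smul_eq_mul]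
        ring
    _ ≤ _ := by
        rw [mul_assoc N⁻¹]
        gcongr

theorem negLogLik_beta_quadratic_majorization_general
    {C : Type} [Fintype C] [DecidableEq C]
    {K p r : ℕ} (n : Fin K → ℕ)
    (x : (k : Fin K) → Fin (n k) → Fin p → ℝ)
    (z : (k : Fin K) → Fin (n k) → Fin r → ℝ)
    (S : (k : Fin K) → Fin (n k) → Finset C) (hS : ∀ k i, (S k i).Nonempty)
    (α : C → ℝ) (γ : Fin K → Fin r → C → ℝ)
    (βt β : Fin p → C → ℝ) (sβ : ℝ) (hsβ : 0 < sβ)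
    (hsβ' : sβ < ((∑ k, n k : ℕ) : ℝ) /
      (Real.sqrt (Fintype.card C) * ∑ k, ∑ i, ∑ j, (x k i j) ^ 2)) :
    negLogLik n x z S α β γ ≤
      negLogLik n x z S α βt γ
        + ∑ j, ∑ l,
            fderiv ℝ (fun β' => negLogLik n x z S α β' γ) βt
              (Pi.single j (Pi.single l 1)) * (β j l - βt j l)
        + (1 / (2 * sβ)) * ∑ j, ∑ l, (β j l - βt j l) ^ 2 := by
  have hlin := sum_sum_apply_single_mul
    (fderiv ℝ (fun β' => negLogLik n x z S α β' γ) βt).toLinearMap (β - βt)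
  simp only [Pi.sub_apply, ContinuousLinearMap.coe_coe] at hlin
  have hstep := mul_le_mul_of_nonneg_right
    (inv_mul_le_inv_of_lt_div_sqrt_mul hsβ (Nat.cast_nonneg _) hsβ')
    (by positivity : 0 ≤ ∑ j, ∑ l, (β j l - βt j l) ^ 2)
  rw [hlin, one_div, mul_inv]
  linarith [negLogLik_le_add_fderiv_add n x z S hS α γ βt β]

/-- Lipschitz-gradient quadratic upper bound (equation (5)) for the β-block:
for any step size `0 < s_β < N / (√|C| Σ_k ‖X_{(k)}‖_F²)`, the scaled negative
log-likelihood is majorized in β by its first-order expansion plus `(1/(2s_β))‖β - βᵗ‖_F²`. -/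
theorem negLogLik_beta_quadratic_majorization
    {C : Type} [Fintype C] [DecidableEq C] [Nonempty C]
    {K p r : ℕ} (hK : 1 ≤ K) (n : Fin K → ℕ) (hn : ∀ k, 1 ≤ n k)
    (x : (k : Fin K) → Fin (n k) → Fin p → ℝ)
    (z : (k : Fin K) → Fin (n k) → Fin r → ℝ)
    (S : (k : Fin K) → Fin (n k) → Finset C) (hS : ∀ k i, (S k i).Nonempty)
    (α : C → ℝ) (γ : Fin K → Fin r → C → ℝ)
    (βt β : Fin p → C → ℝ) (sβ : ℝ) (hsβ : 0 < sβ)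
    (hsβ' : sβ < ((∑ k, n k : ℕ) : ℝ) /
      (Real.sqrt (Fintype.card C) * ∑ k, ∑ i, ∑ j, (x k i j) ^ 2)) :
    negLogLik n x z S α β γ ≤
      negLogLik n x z S α βt γ
        + ∑ j, ∑ l,
            fderiv ℝ (fun β' => negLogLik n x z S α β' γ) βt
              (Pi.single j (Pi.single l 1)) * (β j l - βt j l)
        + (1 / (2 * sβ)) * ∑ j, ∑ l, (β j l - βt j l) ^ 2 :=
  negLogLik_beta_quadratic_majorization_general n x z S hS α γ βt β sβ hsβ hsβ'
end

section
/- Suppose λ > 0 and ρ > 0, and suppose (α̂, β̂, γ̂) is a global minimizer of F_{λ,ρ} over ℝ^C × ℝ^{p×C} × (ℝ^{r×C})^K. Then every row of β̂ sums to zero, i.e. Σ_{l∈C} β̂_{j,l} = 0 for all j = 1,…,p, and every row of each γ̂_{(k)} sums to zero, i.e. Σ_{l∈C} [γ̂_{(k)}]_{q,l} = 0 for all q = 1,…,r and k = 1,…,K. -/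
open scoped BigOperators

/-!
Subtracting its mean from every row of `β` and of each `γ_{(k)}` shifts each linear predictor
`η_{(k)i,·}` by a constant, which the softmax does not see, so `L` is unchanged. Centering a
vector `v ∈ ℝ^C` lowers `‖v‖²` by `(Σ_l v_l)² / |C|`, so both penalties decrease, strictly unless
every row already sums to zero; at a minimizer they cannot.
-/

open Finset

noncomputable def center {C : Type*} [Fintype C] (v : C → ℝ) (l : C) : ℝ :=
  v l - (∑ t, v t) / Fintype.card C

section Likelihood

variable {C : Type} [Fintype C]

theorem obsNLL_add_const (S : Finset C) (η : C → ℝ) (c : ℝ) :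
    obsNLL S (fun l => η l + c) = obsNLL S η := by
  have hexp : ∀ T : Finset C,
      ∑ l ∈ T, Real.exp (η l + c) = (∑ l ∈ T, Real.exp (η l)) * Real.exp c :=
    fun T => by simp only [Real.exp_add, sum_mul]
  rw [obsNLL, obsNLL, hexp, hexp, mul_div_mul_right _ _ (Real.exp_ne_zero c)]

variable {p r : ℕ}

theorem eta_sub_rowConst (x : Fin p → ℝ) (z : Fin r → ℝ) (α : C → ℝ) (β : Fin p → C → ℝ)
    (γ : Fin r → C → ℝ) (b : Fin p → ℝ) (g : Fin r → ℝ) :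
    eta x z α (fun j l => β j l - b j) (fun q l => γ q l - g q)
      = fun l => eta x z α β γ l + -(∑ j, x j * b j + ∑ q, z q * g q) := by
  funext l
  simp only [eta, mul_sub, sum_sub_distrib]
  ring

variable {K : ℕ}

theorem negLogLik_sub_rowConst (n : Fin K → ℕ)
    (x : (k : Fin K) → Fin (n k) → Fin p → ℝ) (z : (k : Fin K) → Fin (n k) → Fin r → ℝ)
    (S : (k : Fin K) → Fin (n k) → Finset C)
    (α : C → ℝ) (β : Fin p → C → ℝ) (γ : Fin K → Fin r → C → ℝ)
    (b : Fin p → ℝ) (g : Fin K → Fin r → ℝ) :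
    negLogLik n x z S α (fun j l => β j l - b j) (fun k q l => γ k q l - g k q)
      = negLogLik n x z S α β γ := by
  simp only [negLogLik, eta_sub_rowConst, obsNLL_add_const]

end Likelihood

section Centering

variable {C ι κ : Type*} [Fintype C] [Fintype ι] [Fintype κ]

theorem sum_sq_center (v : C → ℝ) :
    ∑ l, center v l ^ 2 = ∑ l, v l ^ 2 - (∑ l, v l) ^ 2 / Fintype.card C := by
  rcases isEmpty_or_nonempty C with _ | _
  · simp
  have hcard : (Fintype.card C : ℝ) ≠ 0 := by positivity
  simp only [center, sub_sq, sum_add_distrib, sum_sub_distrib, ← sum_mul, ← mul_sum,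
    sum_const, card_univ, nsmul_eq_mul]
  field_simp
  ring

theorem sum_sq_center_le (v : C → ℝ) : ∑ l, center v l ^ 2 ≤ ∑ l, v l ^ 2 := by
  rw [sum_sq_center]
  exact sub_le_self _ (by positivity)

theorem sum_sq_center_lt {v : C → ℝ} (hv : ∑ l, v l ≠ 0) :
    ∑ l, center v l ^ 2 < ∑ l, v l ^ 2 := by
  have : Nonempty C := univ_nonempty_iff.mp (nonempty_of_sum_ne_zero hv)
  rw [sum_sq_center]
  exact sub_lt_self _ (by positivity)

theorem sum_sqrt_sum_sq_center_le (β : ι → C → ℝ) :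
    ∑ j, √(∑ l, center (β j) l ^ 2) ≤ ∑ j, √(∑ l, β j l ^ 2) :=
  sum_le_sum fun j _ => Real.sqrt_le_sqrt (sum_sq_center_le (β j))

theorem sum_sqrt_sum_sq_center_lt (β : ι → C → ℝ) (j : ι) (hj : ∑ l, β j l ≠ 0) :
    ∑ i, √(∑ l, center (β i) l ^ 2) < ∑ i, √(∑ l, β i l ^ 2) :=
  sum_lt_sum (fun i _ => Real.sqrt_le_sqrt (sum_sq_center_le (β i)))
    ⟨j, mem_univ j, Real.sqrt_lt_sqrt (by positivity) (sum_sq_center_lt hj)⟩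

theorem sum_sum_sum_sq_center_le (γ : κ → ι → C → ℝ) :
    ∑ k, ∑ q, ∑ l, center (γ k q) l ^ 2 ≤ ∑ k, ∑ q, ∑ l, γ k q l ^ 2 :=
  sum_le_sum fun k _ => sum_le_sum fun q _ => sum_sq_center_le (γ k q)

theorem sum_sum_sum_sq_center_lt (γ : κ → ι → C → ℝ) (k : κ) (q : ι)
    (hkq : ∑ l, γ k q l ≠ 0) :
    ∑ a, ∑ b, ∑ l, center (γ a b) l ^ 2 < ∑ a, ∑ b, ∑ l, γ a b l ^ 2 :=
  sum_lt_sum (fun a _ => sum_le_sum fun b _ => sum_sq_center_le (γ a b))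
    ⟨k, mem_univ k, sum_lt_sum (fun b _ => sum_sq_center_le (γ k b))
      ⟨q, mem_univ q, sum_sq_center_lt hkq⟩⟩

end Centering

theorem minimizer_rows_sum_to_zero_general
    {C : Type} [Fintype C] {K p r : ℕ}
    (n : Fin K → ℕ)
    (x : (k : Fin K) → Fin (n k) → Fin p → ℝ)
    (z : (k : Fin K) → Fin (n k) → Fin r → ℝ)
    (S : (k : Fin K) → Fin (n k) → Finset C)
    (lam ρ : ℝ) (hlam : 0 < lam) (hρ : 0 < ρ)
    (αhat : C → ℝ) (βhat : Fin p → C → ℝ) (γhat : Fin K → Fin r → C → ℝ)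
    (hmin : ∀ (α : C → ℝ) (β : Fin p → C → ℝ) (γ : Fin K → Fin r → C → ℝ),
      penObj n x z S lam ρ αhat βhat γhat ≤ penObj n x z S lam ρ α β γ) :
    (∀ j : Fin p, ∑ l, βhat j l = 0) ∧
    (∀ (k : Fin K) (q : Fin r), ∑ l, γhat k q l = 0) := by
  have hL : negLogLik n x z S αhat (fun j => center (βhat j)) (fun k q => center (γhat k q))
      = negLogLik n x z S αhat βhat γhat :=
    negLogLik_sub_rowConst n x z S αhat βhat γhat _ _
  have hpen := hmin αhat (fun j => center (βhat j)) (fun k q => center (γhat k q))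
  rw [penObj, penObj, hL] at hpen
  have hβ_le := sum_sqrt_sum_sq_center_le βhat
  have hγ_le := sum_sum_sum_sq_center_le γhat
  constructor
  · intro j
    by_contra hj
    have hβ_lt := sum_sqrt_sum_sq_center_lt βhat j hj
    nlinarith
  · intro k q
    by_contra hkq
    have hγ_lt := sum_sum_sum_sq_center_lt γhat k q hkq
    nlinarith

/-- At any global minimizer of the penalized objective `F_{λ,ρ}` with `λ, ρ > 0`,
every row of `β̂` and every row of each `γ̂_{(k)}` sums to zero. -/
theorem minimizer_rows_sum_to_zero
    {C : Type} [Fintype C] [Nonempty C] {K p r : ℕ} (hK : 1 ≤ K)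
    (n : Fin K → ℕ) (hn : ∀ k, 1 ≤ n k)
    (x : (k : Fin K) → Fin (n k) → Fin p → ℝ)
    (z : (k : Fin K) → Fin (n k) → Fin r → ℝ)
    (S : (k : Fin K) → Fin (n k) → Finset C) (hS : ∀ k i, (S k i).Nonempty)
    (lam ρ : ℝ) (hlam : 0 < lam) (hρ : 0 < ρ)
    (αhat : C → ℝ) (βhat : Fin p → C → ℝ) (γhat : Fin K → Fin r → C → ℝ)
    (hmin : ∀ (α : C → ℝ) (β : Fin p → C → ℝ) (γ : Fin K → Fin r → C → ℝ),
      penObj n x z S lam ρ αhat βhat γhat ≤ penObj n x z S lam ρ α β γ) :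
    (∀ j : Fin p, ∑ l, βhat j l = 0) ∧
    (∀ (k : Fin K) (q : Fin r), ∑ l, γhat k q l = 0) :=
  minimizer_rows_sum_to_zero_general n x z S lam ρ hlam hρ αhat βhat γhat hmin
end
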